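/- Fix integers m ≥ 0, n ≥ 1 and real constants C₁, C₂ (possibly depending on b with C₁ bounded away from 0 and C₂ bounded). As b → +∞, the weighted L² norm of the trial state u_{m,n}(r) = r^m L^m_{n-1}(b r²/2)(C₁ e^{(b/4)(1−r²)} + C₂ e^{−(b/4)(1−r²)}) satisfies ∫_0^1 |u_{m,n}(r)|² r dr = (C₁² Γ(m+n) 2^m / (b^{m+1} (n−1)!)) e^{b/2} + O(b^{2n−2}). -/

import Mathlib

open Filter Asymptotics

/-- The associated Laguerre polynomial of degree `k` with parameter `m`. -/
noncomputable def laguerre (m k : ℕ) (s : ℝ) : ℝ :=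
  ∑ l ∈ Finset.range (k + 1),
    ((-1 : ℝ) ^ l / l.factorial) * ((k + m).choose (k - l)) * s ^ l

/-- The trial state `u_{m,n}` with `b`-dependent coefficients. -/
noncomputable def trialState (m n : ℕ) (b C₁ C₂ : ℝ) (r : ℝ) : ℝ :=
  r ^ m * laguerre m (n - 1) (b * r ^ 2 / 2) *
    (C₁ * Real.exp (b / 4 * (1 - r ^ 2)) + C₂ * Real.exp (-(b / 4) * (1 - r ^ 2)))


open MeasureTheory Set Real Finset


-- abbreviation for coefficients
noncomputable def lagC (m k l : ℕ) : ℝ := ((-1 : ℝ) ^ l / l.factorial) * ((k + m).choose (k - l))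

lemma laguerre_eq (m k : ℕ) (s : ℝ) :
    laguerre m k s = ∑ l ∈ Finset.range (k+1), lagC m k l * s ^ l := rfl

lemma laguerre_continuous (m k : ℕ) : Continuous (laguerre m k) := by
  unfold laguerre
  exact continuous_finset_sum _ fun l _ => continuous_const.mul (continuous_pow l)

lemma g0_eq (m k : ℕ) (s : ℝ) :
    s^m * (laguerre m k s)^2 * Real.exp (-s)
      = ∑ l ∈ Finset.range (k+1), ∑ l' ∈ Finset.range (k+1),
          (lagC m k l * lagC m k l') * (s^(m+l+l') * Real.exp (-s)) := by
  rw [laguerre_eq, sq, Finset.sum_mul_sum]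
  rw [Finset.mul_sum, Finset.sum_mul]
  refine Finset.sum_congr rfl fun l _ => ?_
  rw [Finset.mul_sum, Finset.sum_mul]
  refine Finset.sum_congr rfl fun l' _ => ?_
  rw [pow_add, pow_add]
  ring

lemma integrable_pow_exp (q : ℕ) :
    IntegrableOn (fun s : ℝ => s^q * Real.exp (-s)) (Ioi (0:ℝ)) := by
  have h := Real.GammaIntegral_convergent (by positivity : (0:ℝ) < q + 1)
  refine h.congr_fun (fun x hx => ?_) measurableSet_Ioi
  have hx0 : (0:ℝ) < x := hx
  beta_reduce
  rw [show (q:ℝ) + 1 - 1 = (q:ℝ) by ring, Real.rpow_natCast]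
  ring

lemma integral_pow_exp (q : ℕ) :
    ∫ s in Ioi (0:ℝ), s^q * Real.exp (-s) = q.factorial := by
  have h := Real.Gamma_eq_integral (by positivity : (0:ℝ) < q + 1)
  rw [Real.Gamma_nat_eq_factorial] at h
  rw [h]
  refine setIntegral_congr_fun measurableSet_Ioi (fun x hx => ?_)
  rw [show (q:ℝ) + 1 - 1 = (q:ℝ) by ring, Real.rpow_natCast]
  ring

open Polynomial in
lemma key (N M p : ℕ) :
    ∑ i ∈ Finset.range (N+1), (-1:ℝ)^(N-i) * (N.choose i) * ((M+i).choose p)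
      = if N ≤ p then ((M.choose (p-N) : ℝ)) else 0 := by
  have hpoly : (X : ℝ[X])^N * (X+1)^M
      = ∑ i ∈ Finset.range (N+1), Polynomial.C ((-1:ℝ)^(N-i) * (N.choose i)) * (X+1)^(M+i) := by
    have h1 : (X : ℝ[X])^N = ((X+1) + (-1))^N := by ring_nf
    rw [h1, add_pow, Finset.sum_mul]
    refine Finset.sum_congr rfl fun i hi => ?_
    have h2 : ((-1 : ℝ[X])) ^ (N - i) = Polynomial.C ((-1:ℝ)^(N-i)) := by
      simp [map_pow]
    rw [h2]
    simp only [map_mul, Polynomial.C_eq_natCast, pow_add]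
    ring
  have hc := congrArg (fun q : ℝ[X] => q.coeff p) hpoly
  simp only [Polynomial.finset_sum_coeff, Polynomial.coeff_C_mul,
    Polynomial.coeff_X_pow_mul', Polynomial.coeff_X_add_one_pow] at hc
  rw [hc]

lemma orth (m k j : ℕ) (hj : j ≤ k) :
    ∑ l ∈ Finset.range (k+1),
        ((-1:ℝ)^l / l.factorial) * ((k+m).choose (k-l)) * (m+j+l).factorial
      = if j = k then (-1:ℝ)^k * (m+k).factorial else 0 := by
  have h1 : ∀ l ∈ Finset.range (k+1),
      ((-1:ℝ)^l / l.factorial) * ((k+m).choose (k-l)) * (m+j+l).factorial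
        = ((m+j).factorial : ℝ) * ((-1:ℝ)^k *
            ((-1:ℝ)^(k-l) * ((k+m).choose (k-l)) * ((m+j+l).choose (m+j)))) := by
    intro l hl
    have hlk : l ≤ k := Nat.lt_succ_iff.mp (Finset.mem_range.mp hl)
    have hfac : (m+j+l).choose (m+j) * (m+j).factorial * l.factorial = (m+j+l).factorial := by
      have := Nat.choose_mul_factorial_mul_factorial (Nat.le_add_right (m+j) l)
      simpa [Nat.add_sub_cancel_left] using this
    have hfacR : ((m+j+l).factorial : ℝ)
        = ((m+j+l).choose (m+j)) * (m+j).factorial * l.factorial := by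
      exact_mod_cast congrArg (fun x : ℕ => (x : ℝ)) hfac.symm
    have hsign : (-1:ℝ)^k * (-1:ℝ)^(k-l) = (-1:ℝ)^l := by
      rw [← pow_add, show k + (k-l) = 2*(k-l) + l by omega, pow_add, pow_mul]
      simp
    have hlfac : (l.factorial : ℝ) ≠ 0 := Nat.cast_ne_zero.mpr l.factorial_ne_zero
    rw [hfacR, ← hsign]
    field_simp
  rw [Finset.sum_congr rfl h1, ← Finset.mul_sum, ← Finset.mul_sum]
  have h2 : ∑ l ∈ Finset.range (k+1),
      (-1:ℝ)^(k-l) * ((k+m).choose (k-l)) * ((m+j+l).choose (m+j))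
        = if j = k then (1:ℝ) else 0 := by
    have hk := key (k+m) j (m+j)
    have hsplit : ∑ i ∈ Finset.range (k+m+1),
        (-1:ℝ)^(k+m-i) * ((k+m).choose i) * ((j+i).choose (m+j))
        = ∑ l ∈ Finset.range (k+1),
            (-1:ℝ)^(k-l) * ((k+m).choose (k-l)) * ((m+j+l).choose (m+j)) := by
      have e1 : (Finset.range (k+m+1)) = Finset.Ico 0 (k+m+1) := by rw [Finset.range_eq_Ico]
      rw [e1, ← Finset.sum_Ico_consecutive _ (Nat.zero_le m) (by omega : m ≤ k+m+1)]
      have hz : ∑ i ∈ Finset.Ico 0 m,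
          (-1:ℝ)^(k+m-i) * ((k+m).choose i) * ((j+i).choose (m+j)) = 0 := by
        refine Finset.sum_eq_zero fun i hi => ?_
        have him : i < m := (Finset.mem_Ico.mp hi).2
        have hc0 : (j+i).choose (m+j) = 0 := Nat.choose_eq_zero_of_lt (by omega)
        simp [hc0]
      rw [hz, zero_add, Finset.sum_Ico_eq_sum_range,
        show k+m+1-m = k+1 by omega]
      refine Finset.sum_congr rfl fun l hl => ?_
      have hlk : l ≤ k := Nat.lt_succ_iff.mp (Finset.mem_range.mp hl)
      have hch : (k+m).choose (m+l) = (k+m).choose (k-l) := by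
        rw [← Nat.choose_symm (by omega : m + l ≤ k + m)]
        congr 1; omega
      rw [show k+m-(m+l) = k-l by omega, show j+(m+l) = m+j+l by omega, hch]
    rw [hsplit] at hk
    rw [hk]
    by_cases hjk : j = k
    · rw [if_pos (by omega), if_pos hjk, show m+j-(k+m) = 0 by omega]
      simp
    · rw [if_neg (by omega), if_neg hjk]
  rw [h2]
  by_cases hjk : j = k
  · subst hjk
    simp [Nat.add_comm m j, mul_comm]
  · simp [hjk]

lemma g0_integrable (m k : ℕ) :
    IntegrableOn (fun s : ℝ => s^m * (laguerre m k s)^2 * Real.exp (-s)) (Ioi (0:ℝ)) := by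
  have : (fun s : ℝ => s^m * (laguerre m k s)^2 * Real.exp (-s))
      = fun s => ∑ l ∈ Finset.range (k+1), ∑ l' ∈ Finset.range (k+1),
          (lagC m k l * lagC m k l') * (s^(m+l+l') * Real.exp (-s)) := funext (g0_eq m k)
  rw [this]
  refine integrable_finset_sum _ fun l _ => integrable_finset_sum _ fun l' _ => ?_
  exact (integrable_pow_exp (m+l+l')).const_mul _

lemma g0_integral (m k : ℕ) :
    ∫ s in Ioi (0:ℝ), s^m * (laguerre m k s)^2 * Real.exp (-s)
      = ((m+k).factorial : ℝ) / k.factorial := by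
  simp_rw [g0_eq m k]
  rw [integral_finset_sum _ (fun l _ => integrable_finset_sum _ fun l' _ =>
    (integrable_pow_exp (m+l+l')).const_mul _)]
  have hstep : ∀ l ∈ Finset.range (k+1),
      (∫ s in Ioi (0:ℝ), ∑ l' ∈ Finset.range (k+1),
          (lagC m k l * lagC m k l') * (s^(m+l+l') * Real.exp (-s)))
        = if l = k then lagC m k l * ((-1:ℝ)^k * (m+k).factorial) else 0 := by
    intro l hl
    have hlk : l ≤ k := Nat.lt_succ_iff.mp (Finset.mem_range.mp hl)
    rw [integral_finset_sum _ (fun l' _ => (integrable_pow_exp (m+l+l')).const_mul _)]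
    have : ∀ l' ∈ Finset.range (k+1),
        (∫ s in Ioi (0:ℝ), (lagC m k l * lagC m k l') * (s^(m+l+l') * Real.exp (-s)))
          = lagC m k l * (((-1:ℝ)^l' / l'.factorial) * ((k+m).choose (k-l')) * (m+l+l').factorial) := by
      intro l' _
      rw [MeasureTheory.integral_const_mul, integral_pow_exp]
      unfold lagC; ring
    rw [Finset.sum_congr rfl this, ← Finset.mul_sum, orth m k l hlk]
    by_cases hlk2 : l = k
    · rw [if_pos hlk2, if_pos hlk2]
    · rw [if_neg hlk2, if_neg hlk2, mul_zero]
  rw [Finset.sum_congr rfl hstep, Finset.sum_ite_eq' (Finset.range (k+1)) k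
    (fun l => lagC m k l * ((-1:ℝ)^k * (m+k).factorial)), if_pos (Finset.self_mem_range_succ k)]
  unfold lagC
  rw [Nat.sub_self, Nat.choose_zero_right]
  have hkk : (-1:ℝ)^k * (-1:ℝ)^k = 1 := by
    rw [← pow_add]; exact Even.neg_one_pow ⟨k, rfl⟩
  push_cast
  rw [show ((-1:ℝ)^k / (k.factorial:ℝ) * 1) * ((-1:ℝ)^k * ((m+k).factorial:ℝ))
      = ((-1:ℝ)^k * (-1:ℝ)^k) * (((m+k).factorial:ℝ)/(k.factorial:ℝ)) by ring, hkk, one_mul]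

lemma integral_exp_half (x : ℝ) :
    ∫ s in Ioi x, Real.exp (-(s/2)) = 2 * Real.exp (-(x/2)) := by
  have hderiv : ∀ s ∈ Ioi x, HasDerivAt (fun s : ℝ => -2 * Real.exp (-(s/2)))
      (Real.exp (-(s/2))) s := by
    intro s _
    have h1 : HasDerivAt (fun s : ℝ => -(s/2)) (-(1/2)) s := by
      simpa using ((hasDerivAt_id s).div_const 2).fun_neg
    have h2 := (Real.hasDerivAt_exp (-(s/2))).comp s h1
    have h3 := h2.const_mul (-2 : ℝ)
    refine h3.congr_deriv ?_
    ring
  have hint : IntegrableOn (fun s : ℝ => Real.exp (-(s/2))) (Ioi x) := by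
    refine (exp_neg_integrableOn_Ioi x one_half_pos).congr_fun (fun s _ => ?_) measurableSet_Ioi
    congr 1; ring
  have htend : Filter.Tendsto (fun s : ℝ => -2 * Real.exp (-(s/2))) Filter.atTop (nhds 0) := by
    have : Filter.Tendsto (fun s : ℝ => Real.exp (-(s/2))) Filter.atTop (nhds 0) := by
      apply Real.tendsto_exp_atBot.comp
      have h4 : Filter.Tendsto (fun s : ℝ => s/2) Filter.atTop Filter.atTop :=
        Filter.tendsto_id.atTop_div_const two_pos
      exact Filter.tendsto_neg_atBot_iff.mpr h4
    simpa using this.const_mul (-2 : ℝ)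
  have := MeasureTheory.integral_Ioi_of_hasDerivAt_of_tendsto
    ((Continuous.continuousWithinAt (by continuity)) : ContinuousWithinAt (fun s : ℝ => -2 * Real.exp (-(s/2))) (Ici x) x)
    hderiv hint htend
  rw [this]; ring


lemma integrable_one_add_pow (q : ℕ) {x : ℝ} (hx : 0 ≤ x) :
    IntegrableOn (fun s : ℝ => (1+s)^q * Real.exp (-s)) (Ioi x) := by
  have hfun : (fun s : ℝ => (1+s)^q * Real.exp (-s))
      = fun s : ℝ => ∑ i ∈ Finset.range (q+1), ((q.choose i : ℝ)) * (s^(q-i) * Real.exp (-s)) := by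
    funext s
    rw [add_pow, Finset.sum_mul]
    refine Finset.sum_congr rfl fun i _ => ?_
    rw [one_pow]
    ring
  rw [hfun]
  refine integrable_finset_sum _ fun i _ => ?_
  exact (((integrable_pow_exp (q-i)).mono_set (Ioi_subset_Ioi hx)).const_mul _)

lemma tail_bound (q : ℕ) {x : ℝ} (hx : 2*(q:ℝ) ≤ x) (hx0 : 0 < x) :
    ∫ s in Ioi x, (1+s)^q * Real.exp (-s) ≤ 2 * (1+x)^q * Real.exp (-x) := by
  have hpt : ∀ s ∈ Ioi x, (1+s)^q * Real.exp (-s)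
      ≤ ((1+x)^q * Real.exp (-(x/2))) * Real.exp (-(s/2)) := by
    intro s hs
    have hsx : x < s := hs
    have hx1 : (0:ℝ) < 1 + x := by linarith
    have h1 : (1:ℝ)+s ≤ (1+x) * Real.exp ((s-x)/(1+x)) := by
      have h := Real.add_one_le_exp ((s-x)/(1+x))
      have := mul_le_mul_of_nonneg_left h hx1.le
      calc (1:ℝ)+s = (1+x) * ((s-x)/(1+x) + 1) := by field_simp; ring
        _ ≤ (1+x) * Real.exp ((s-x)/(1+x)) := this
    calc (1+s)^q * Real.exp (-s)
        ≤ ((1+x) * Real.exp ((s-x)/(1+x)))^q * Real.exp (-s) := by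
          gcongr
          linarith
      _ = (1+x)^q * Real.exp ((q:ℝ)*((s-x)/(1+x))) * Real.exp (-s) := by
          rw [mul_pow, ← Real.exp_nat_mul]
      _ ≤ (1+x)^q * Real.exp ((s-x)/2) * Real.exp (-s) := by
          gcongr
          rw [show (q:ℝ)*((s-x)/(1+x)) = ((q:ℝ)*(s-x))/(1+x) by ring,
            div_le_div_iff₀ hx1 two_pos]
          nlinarith
      _ = ((1+x)^q * Real.exp (-(x/2))) * Real.exp (-(s/2)) := by
          rw [mul_assoc, mul_assoc, ← Real.exp_add, ← Real.exp_add]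
          congr 2
          ring
  have hintR : IntegrableOn (fun s : ℝ => ((1+x)^q * Real.exp (-(x/2))) * Real.exp (-(s/2))) (Ioi x) := by
    refine Integrable.const_mul ?_ _
    refine (exp_neg_integrableOn_Ioi x one_half_pos).congr_fun (fun s _ => ?_) measurableSet_Ioi
    congr 1; ring
  calc ∫ s in Ioi x, (1+s)^q * Real.exp (-s)
      ≤ ∫ s in Ioi x, ((1+x)^q * Real.exp (-(x/2))) * Real.exp (-(s/2)) :=
        setIntegral_mono_on (integrable_one_add_pow q hx0.le) hintR measurableSet_Ioi hpt
    _ = ((1+x)^q * Real.exp (-(x/2))) * (2 * Real.exp (-(x/2))) := by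
        rw [MeasureTheory.integral_const_mul, integral_exp_half]
    _ = 2 * (1+x)^q * Real.exp (-x) := by
        rw [show -x = -(x/2) + -(x/2) by ring, Real.exp_add]
        ring

noncomputable def lagA (m k : ℕ) : ℝ :=
  ∑ l ∈ Finset.range (k+1), (((k+m).choose (k-l)) : ℝ) / l.factorial

lemma lagA_nonneg (m k : ℕ) : 0 ≤ lagA m k :=
  Finset.sum_nonneg fun l _ => by positivity

lemma laguerre_bound (m k : ℕ) {s : ℝ} (hs : 0 ≤ s) :
    |laguerre m k s| ≤ lagA m k * (1+s)^k := by
  rw [laguerre_eq]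
  calc |∑ l ∈ Finset.range (k+1), lagC m k l * s^l|
      ≤ ∑ l ∈ Finset.range (k+1), |lagC m k l * s^l| :=
        Finset.abs_sum_le_sum_abs _ _
    _ ≤ ∑ l ∈ Finset.range (k+1), ((((k+m).choose (k-l)) : ℝ) / l.factorial) * (1+s)^k := by
        refine Finset.sum_le_sum fun l hl => ?_
        have hlk : l ≤ k := Nat.lt_succ_iff.mp (Finset.mem_range.mp hl)
        have habs : |lagC m k l| = (((k+m).choose (k-l)) : ℝ) / l.factorial := by
          unfold lagC
          rw [abs_mul, abs_div, abs_pow, abs_neg, abs_one, one_pow]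
          simp [Nat.abs_cast]
          ring
        rw [abs_mul, habs, abs_pow, abs_of_nonneg hs]
        refine mul_le_mul_of_nonneg_left ?_ (by positivity)
        calc s^l ≤ (1+s)^l := pow_le_pow_left₀ hs (by linarith) l
          _ ≤ (1+s)^k := pow_le_pow_right₀ (by linarith) hlk
    _ = lagA m k * (1+s)^k := by rw [lagA, Finset.sum_mul]

lemma lag_sq_bound (m k : ℕ) {s : ℝ} (hs : 0 ≤ s) :
    (laguerre m k s)^2 ≤ (lagA m k)^2 * (1+s)^(2*k) := by
  have h := laguerre_bound m k hs
  calc (laguerre m k s)^2 = |laguerre m k s|^2 := (sq_abs _).symm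
    _ ≤ (lagA m k * (1+s)^k)^2 := pow_le_pow_left₀ (abs_nonneg _) h 2
    _ = (lagA m k)^2 * (1+s)^(2*k) := by rw [mul_pow, ← pow_mul, mul_comm k 2]

noncomputable def f₁ (m k : ℕ) (b r : ℝ) : ℝ :=
  r^(2*m+1) * (laguerre m k (b * r^2 / 2))^2 * Real.exp (-(b * r^2 / 2))
noncomputable def f₂ (m k : ℕ) (b r : ℝ) : ℝ :=
  r^(2*m+1) * (laguerre m k (b * r^2 / 2))^2
noncomputable def f₃ (m k : ℕ) (b r : ℝ) : ℝ :=
  r^(2*m+1) * (laguerre m k (b * r^2 / 2))^2 * Real.exp (b * r^2 / 2)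

lemma f₂_cont (m k : ℕ) (b : ℝ) : Continuous (f₂ m k b) := by
  unfold f₂
  exact (continuous_pow _).mul (((laguerre_continuous m k).comp (by continuity)).pow 2)

lemma f₁_cont (m k : ℕ) (b : ℝ) : Continuous (f₁ m k b) := by
  unfold f₁
  exact ((f₂_cont m k b).mul (Real.continuous_exp.comp (by continuity)))

lemma f₃_cont (m k : ℕ) (b : ℝ) : Continuous (f₃ m k b) := by
  unfold f₃
  exact ((f₂_cont m k b).mul (Real.continuous_exp.comp (by continuity)))


lemma expand_pointwise (m k : ℕ) (b c₁ c₂ r : ℝ) :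
    (trialState m (k+1) b c₁ c₂ r)^2 * r
      = c₁^2 * Real.exp (b/2) * f₁ m k b r + 2*c₁*c₂ * f₂ m k b r
        + c₂^2 * Real.exp (-(b/2)) * f₃ m k b r := by
  unfold trialState f₁ f₂ f₃
  simp only [Nat.add_sub_cancel]
  set E := Real.exp (b/4*(1-r^2)) with hE
  set E' := Real.exp (-(b/4)*(1-r^2)) with hE'
  have hEE : E*E = Real.exp (b/2) * Real.exp (-(b*r^2/2)) := by
    rw [hE, ← Real.exp_add, ← Real.exp_add]; congr 1; ring
  have hEE' : E*E' = 1 := by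
    rw [hE, hE', ← Real.exp_add,
      show b/4*(1-r^2) + -(b/4)*(1-r^2) = 0 by ring, Real.exp_zero]
  have hE'E' : E'*E' = Real.exp (-(b/2)) * Real.exp (b*r^2/2) := by
    rw [hE', ← Real.exp_add, ← Real.exp_add]; congr 1; ring
  calc (r^m * laguerre m k (b*r^2/2) * (c₁*E + c₂*E'))^2 * r
      = r^(2*m+1) * (laguerre m k (b*r^2/2))^2
          * (c₁^2*(E*E) + 2*c₁*c₂*(E*E') + c₂^2*(E'*E')) := by ring
    _ = c₁^2 * Real.exp (b/2)
          * (r^(2*m+1) * (laguerre m k (b*r^2/2))^2 * Real.exp (-(b*r^2/2)))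
        + 2*c₁*c₂ * (r^(2*m+1) * (laguerre m k (b*r^2/2))^2)
        + c₂^2 * Real.exp (-(b/2))
          * (r^(2*m+1) * (laguerre m k (b*r^2/2))^2 * Real.exp (b*r^2/2)) := by
        rw [hEE, hEE', hE'E']; ring

lemma I1_eq (m k : ℕ) {b : ℝ} (hb : 0 < b) :
    ∫ r in (0:ℝ)..1, f₁ m k b r
      = b⁻¹ * (2/b)^m * ∫ s in (0:ℝ)..(b/2), s^m * (laguerre m k s)^2 * Real.exp (-s) := by
  have hbne : b ≠ 0 := ne_of_gt hb
  set g : ℝ → ℝ := fun s => (2/b)^m * (s^m * (laguerre m k s)^2 * Real.exp (-s)) with hg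
  have hgc : Continuous g := by
    refine continuous_const.mul ?_
    exact ((continuous_pow m).mul ((laguerre_continuous m k).pow 2)).mul
      (Real.continuous_exp.comp continuous_neg)
  have hf : ∀ x ∈ Set.uIcc (0:ℝ) 1, HasDerivAt (fun r : ℝ => b * r^2 / 2) (b*x) x := by
    intro x _
    have := ((hasDerivAt_pow 2 x).const_mul b).div_const 2
    refine this.congr_deriv ?_
    simp
    ring
  have hf' : ContinuousOn (fun x : ℝ => b*x) (Set.uIcc (0:ℝ) 1) := by fun_prop
  have hsub := intervalIntegral.integral_comp_smul_deriv hf hf' hgc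
  have hkey : ∀ x : ℝ, (b*x) • ((g ∘ fun r : ℝ => b * r^2 / 2) x) = b * f₁ m k b x := by
    intro x
    simp only [Function.comp, hg, smul_eq_mul]
    unfold f₁
    calc b*x * ((2/b)^m * ((b*x^2/2)^m * (laguerre m k (b*x^2/2))^2 * Real.exp (-(b*x^2/2))))
        = ((2/b) * (b*x^2/2))^m * (b * x * ((laguerre m k (b*x^2/2))^2 * Real.exp (-(b*x^2/2)))) := by
          rw [mul_pow]; ring
      _ = (x^2)^m * (b * x * ((laguerre m k (b*x^2/2))^2 * Real.exp (-(b*x^2/2)))) := by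
          rw [show (2/b) * (b*x^2/2) = x^2 by field_simp]
      _ = b * (x^(2*m+1) * (laguerre m k (b*x^2/2))^2 * Real.exp (-(b*x^2/2))) := by
          rw [← pow_mul, mul_comm 2 m]; ring
  rw [show (∫ x in (0:ℝ)..1, (b*x) • ((g ∘ fun r : ℝ => b * r^2 / 2) x))
      = ∫ x in (0:ℝ)..1, b * f₁ m k b x from intervalIntegral.integral_congr fun x _ => hkey x]
    at hsub
  rw [intervalIntegral.integral_const_mul] at hsub
  rw [show b*(0:ℝ)^2/2 = 0 by norm_num, show b*(1:ℝ)^2/2 = b/2 by ring] at hsub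
  rw [hg] at hsub
  rw [intervalIntegral.integral_const_mul] at hsub
  field_simp at hsub ⊢
  linarith [hsub]

set_option maxHeartbeats 1000000 in
/-- asymptotics of the weighted `L²((0,1), r dr)` norm of the trial state:
`‖u_{m,n}‖² = (C₁² Γ(m+n) 2^m / (b^{m+1}(n-1)!)) e^{b/2} + O(b^{2n-2})` as `b → ∞`. -/
theorem trialState_norm_asymptotics (m n : ℕ) (hn : 1 ≤ n) (C₁ C₂ : ℝ → ℝ)
    (hC₁ : ∃ c > 0, ∀ b, c ≤ |C₁ b|)
    (hbdd : ∃ M, ∀ b, |C₁ b| ≤ M ∧ |C₂ b| ≤ M) :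
    (fun b : ℝ =>
        (∫ r in Set.Ioo (0 : ℝ) 1, (trialState m n b (C₁ b) (C₂ b) r) ^ 2 * r)
          - (C₁ b) ^ 2 * Real.Gamma (m + n) * 2 ^ m / (b ^ (m + 1) * (n - 1).factorial)
              * Real.exp (b / 2))
      =O[atTop] fun b : ℝ => b ^ (2 * n - 2) := by
  obtain ⟨k, rfl⟩ : ∃ k, n = k + 1 := ⟨n - 1, by omega⟩
  obtain ⟨M, hM⟩ := hbdd
  have hM0 : 0 ≤ M := le_trans (abs_nonneg _) (hM 0).1
  set A := lagA m k with hA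
  have hA0 : 0 ≤ A := lagA_nonneg m k
  set q := m + 2*k with hqdef
  rw [Asymptotics.isBigO_iff]
  refine ⟨M^2*A^2*(2^(m+1)+3), ?_⟩
  filter_upwards [Filter.eventually_ge_atTop (4*(q:ℝ)+4)] with b hb
  have hq0 : (0:ℝ) ≤ q := Nat.cast_nonneg q
  have hb0 : 0 < b := by linarith
  have hb1 : 1 ≤ b := by linarith
  have hb2 : 2 ≤ b := by linarith
  have hbq : 2*(q:ℝ) ≤ b/2 := by linarith
  obtain ⟨hMc1, hMc2⟩ := hM b
  set c₁ := C₁ b with hc₁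
  set c₂ := C₂ b with hc₂
  set J : ℝ := ((m+k).factorial : ℝ) / k.factorial with hJ
  set T : ℝ := ∫ s in Set.Ioi (b/2), s^m * (laguerre m k s)^2 * Real.exp (-s) with hT
  have hTnn : 0 ≤ T := by
    rw [hT]
    refine MeasureTheory.setIntegral_nonneg measurableSet_Ioi fun s hs => ?_
    have hs0 : (0:ℝ) < s := lt_trans (by linarith) hs
    have := Real.exp_pos (-s)
    positivity
  have hTle : T ≤ 2*A^2*b^q*Real.exp (-(b/2)) := by
    have hpt : ∀ s ∈ Set.Ioi (b/2), s^m * (laguerre m k s)^2 * Real.exp (-s)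
        ≤ A^2 * ((1+s)^q * Real.exp (-s)) := by
      intro s hs
      have hs0 : (0:ℝ) < s := lt_trans (by linarith) hs
      have h1 : s^m ≤ (1+s)^m := pow_le_pow_left₀ hs0.le (by linarith) m
      have h2 := lag_sq_bound m k hs0.le
      calc s^m * (laguerre m k s)^2 * Real.exp (-s)
          ≤ ((1+s)^m * (A^2 * (1+s)^(2*k))) * Real.exp (-s) := by
            refine mul_le_mul_of_nonneg_right ?_ (Real.exp_pos (-s)).le
            exact mul_le_mul h1 h2 (sq_nonneg _) (by positivity)
        _ = A^2 * ((1+s)^q * Real.exp (-s)) := by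
            rw [hqdef, pow_add]; ring
    have hmono := MeasureTheory.setIntegral_mono_on
      ((g0_integrable m k).mono_set (Set.Ioi_subset_Ioi (show (0:ℝ) ≤ b/2 by linarith)))
      ((integrable_one_add_pow q (by linarith : (0:ℝ) ≤ b/2)).const_mul _)
      measurableSet_Ioi hpt
    rw [MeasureTheory.integral_const_mul] at hmono
    have htail := tail_bound q hbq (by linarith)
    have hbb : (1+b/2)^q ≤ b^q := pow_le_pow_left₀ (by linarith) (by linarith) q
    calc T ≤ A^2 * ∫ s in Set.Ioi (b/2), (1+s)^q * Real.exp (-s) := hmono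
      _ ≤ A^2 * (2*(1+b/2)^q*Real.exp (-(b/2))) :=
          mul_le_mul_of_nonneg_left htail (by positivity)
      _ ≤ 2*A^2*b^q*Real.exp (-(b/2)) := by
          rw [show A^2*(2*(1+b/2)^q*Real.exp (-(b/2)))
              = (2*A^2*Real.exp (-(b/2)))*((1+b/2)^q) by ring,
            show 2*A^2*b^q*Real.exp (-(b/2)) = (2*A^2*Real.exp (-(b/2)))*(b^q) by ring]
          exact mul_le_mul_of_nonneg_left hbb (by positivity)
  have hIoo : (∫ r in Set.Ioo (0:ℝ) 1, (trialState m (k+1) b c₁ c₂ r)^2 * r)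
      = ∫ r in (0:ℝ)..1, (trialState m (k+1) b c₁ c₂ r)^2 * r := by
    rw [intervalIntegral.integral_of_le zero_le_one,
      MeasureTheory.integral_Ioc_eq_integral_Ioo]
  have i1 : IntervalIntegrable (fun r => c₁^2*Real.exp (b/2) * f₁ m k b r)
      MeasureTheory.volume 0 1 :=
    (continuous_const.mul (f₁_cont m k b)).intervalIntegrable 0 1
  have i2 : IntervalIntegrable (fun r => 2*c₁*c₂ * f₂ m k b r)
      MeasureTheory.volume 0 1 :=
    (continuous_const.mul (f₂_cont m k b)).intervalIntegrable 0 1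
  have i3 : IntervalIntegrable (fun r => c₂^2*Real.exp (-(b/2)) * f₃ m k b r)
      MeasureTheory.volume 0 1 :=
    (continuous_const.mul (f₃_cont m k b)).intervalIntegrable 0 1
  have hsplit : ∫ r in (0:ℝ)..1, (trialState m (k+1) b c₁ c₂ r)^2 * r
      = c₁^2*Real.exp (b/2) * (∫ r in (0:ℝ)..1, f₁ m k b r)
        + 2*c₁*c₂ * (∫ r in (0:ℝ)..1, f₂ m k b r)
        + c₂^2*Real.exp (-(b/2)) * (∫ r in (0:ℝ)..1, f₃ m k b r) := by
    rw [intervalIntegral.integral_congr (g :=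
      fun r => c₁^2*Real.exp (b/2) * f₁ m k b r + 2*c₁*c₂ * f₂ m k b r
        + c₂^2*Real.exp (-(b/2)) * f₃ m k b r)
      (fun r _ => expand_pointwise m k b c₁ c₂ r)]
    rw [intervalIntegral.integral_add (i1.add i2) i3, intervalIntegral.integral_add i1 i2,
      intervalIntegral.integral_const_mul, intervalIntegral.integral_const_mul,
      intervalIntegral.integral_const_mul]
  have hIoc : ∫ s in (0:ℝ)..(b/2), s^m * (laguerre m k s)^2 * Real.exp (-s) = J - T := by
    rw [intervalIntegral.integral_of_le (by linarith : (0:ℝ) ≤ b/2)]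
    have hu : Set.Ioc (0:ℝ) (b/2) ∪ Set.Ioi (b/2) = Set.Ioi 0 :=
      Set.Ioc_union_Ioi_eq_Ioi (by linarith)
    have hadd := MeasureTheory.setIntegral_union (Set.Ioc_disjoint_Ioi le_rfl)
      measurableSet_Ioi
      ((g0_integrable m k).mono_set Set.Ioc_subset_Ioi_self)
      ((g0_integrable m k).mono_set (Set.Ioi_subset_Ioi (show (0:ℝ) ≤ b/2 by linarith)))
    rw [hu, g0_integral m k] at hadd
    rw [← hT] at hadd
    rw [← hJ] at hadd
    linarith
  have hI1 := I1_eq m k hb0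
  have hf2b : ∀ r ∈ Set.uIoc (0:ℝ) 1, ‖f₂ m k b r‖ ≤ A^2 * b^(2*k) := by
    intro r hr
    rw [Set.uIoc_of_le zero_le_one] at hr
    obtain ⟨hr0, hr1⟩ := hr
    have harg0 : (0:ℝ) ≤ b*r^2/2 := by positivity
    have hr2 : r^2 ≤ 1 := by nlinarith
    have harg : 1 + b*r^2/2 ≤ b := by nlinarith
    have h1 : r^(2*m+1) ≤ 1 := pow_le_one₀ hr0.le hr1
    have h2 : (laguerre m k (b*r^2/2))^2 ≤ A^2*(1+b*r^2/2)^(2*k) := lag_sq_bound m k harg0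
    have h3 : (1+b*r^2/2)^(2*k) ≤ b^(2*k) := pow_le_pow_left₀ (by positivity) harg _
    rw [Real.norm_eq_abs]
    unfold f₂
    rw [abs_of_nonneg (by positivity)]
    calc r^(2*m+1) * (laguerre m k (b*r^2/2))^2
        ≤ 1 * (A^2*(1+b*r^2/2)^(2*k)) := mul_le_mul h1 h2 (sq_nonneg _) zero_le_one
      _ = A^2*(1+b*r^2/2)^(2*k) := one_mul _
      _ ≤ A^2*b^(2*k) := mul_le_mul_of_nonneg_left h3 (by positivity)
  have hI2 : |∫ r in (0:ℝ)..1, f₂ m k b r| ≤ A^2*b^(2*k) := by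
    have := intervalIntegral.norm_integral_le_of_norm_le_const hf2b
    simpa using this
  have hf3b : ∀ r ∈ Set.uIoc (0:ℝ) 1, ‖f₃ m k b r‖ ≤ A^2 * b^(2*k) * Real.exp (b/2) := by
    intro r hr
    have h2 := hf2b r hr
    rw [Set.uIoc_of_le zero_le_one] at hr
    obtain ⟨hr0, hr1⟩ := hr
    have hr2 : r^2 ≤ 1 := by nlinarith
    have hexp : Real.exp (b*r^2/2) ≤ Real.exp (b/2) := Real.exp_le_exp.mpr (by nlinarith)
    have : f₃ m k b r = f₂ m k b r * Real.exp (b*r^2/2) := by unfold f₂ f₃; ring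
    rw [Real.norm_eq_abs, this, abs_mul, abs_of_pos (Real.exp_pos _)]
    rw [Real.norm_eq_abs] at h2
    exact mul_le_mul h2 hexp (Real.exp_pos _).le (by positivity)
  have hI3 : |∫ r in (0:ℝ)..1, f₃ m k b r| ≤ A^2*b^(2*k)*Real.exp (b/2) := by
    have := intervalIntegral.norm_integral_le_of_norm_le_const hf3b
    simpa using this
  have hGamma : Real.Gamma (↑m + ↑(k+1)) = ((m+k).factorial : ℝ) := by
    rw [show ((m:ℝ) + ((k+1:ℕ):ℝ)) = ((m+k : ℕ) : ℝ) + 1 by push_cast; ring,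
      Real.Gamma_nat_eq_factorial]
  have hkf : ((k.factorial : ℝ)) ≠ 0 := Nat.cast_ne_zero.mpr k.factorial_ne_zero
  have hmain : c₁^2 * Real.Gamma (↑m + ↑(k+1)) * 2^m / (b^(m+1) * ((k+1)-1).factorial)
        * Real.exp (b/2)
      = c₁^2 * Real.exp (b/2) * (b⁻¹ * (2/b)^m * J) := by
    rw [hGamma]
    simp only [Nat.add_sub_cancel]
    rw [hJ]
    rw [div_pow, pow_succ]
    field_simp
    ring
  have hD : (∫ r in Set.Ioo (0:ℝ) 1, (trialState m (k+1) b c₁ c₂ r)^2 * r)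
      - c₁^2 * Real.Gamma (↑m + ↑(k+1)) * 2^m / (b^(m+1) * ((k+1)-1).factorial)
          * Real.exp (b/2)
      = -(c₁^2 * Real.exp (b/2) * (b⁻¹*(2/b)^m) * T)
        + 2*c₁*c₂ * (∫ r in (0:ℝ)..1, f₂ m k b r)
        + c₂^2*Real.exp (-(b/2)) * (∫ r in (0:ℝ)..1, f₃ m k b r) := by
    rw [hIoo, hsplit, hI1, hIoc, hmain]
    ring
  have h2k : 2*(k+1)-2 = 2*k := by omega
  rw [Real.norm_eq_abs, Real.norm_eq_abs, hD, h2k, abs_of_pos (pow_pos hb0 (2*k))]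
  -- now bound the three pieces
  have hexp1 : Real.exp (b/2) * Real.exp (-(b/2)) = 1 := by
    rw [← Real.exp_add]; simp
  have hpow : b⁻¹ * (2/b)^m = 2^m / b^(m+1) := by
    rw [div_pow, pow_succ]
    field_simp
  have hc1sq : c₁^2 ≤ M^2 := by
    rw [← sq_abs c₁]
    exact pow_le_pow_left₀ (abs_nonneg _) hMc1 2
  have hc2sq : c₂^2 ≤ M^2 := by
    rw [← sq_abs c₂]
    exact pow_le_pow_left₀ (abs_nonneg _) hMc2 2
  have hqb : b^q / b^(m+1) ≤ b^(2*k) := by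
    rw [div_le_iff₀ (pow_pos hb0 (m+1)), ← pow_add]
    exact pow_le_pow_right₀ hb1 (by omega)
  have hstep : Real.exp (b/2) * (b⁻¹*(2/b)^m) * T ≤ 2^(m+1)*A^2*b^(2*k) := by
    have h1 : Real.exp (b/2) * (b⁻¹*(2/b)^m) * T
        ≤ Real.exp (b/2) * (b⁻¹*(2/b)^m) * (2*A^2*b^q*Real.exp (-(b/2))) :=
      mul_le_mul_of_nonneg_left hTle (by positivity)
    have h2 : Real.exp (b/2) * (b⁻¹*(2/b)^m) * (2*A^2*b^q*Real.exp (-(b/2)))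
        = 2*A^2*2^m * (b^q / b^(m+1)) := by
      calc Real.exp (b/2) * (b⁻¹*(2/b)^m) * (2*A^2*b^q*Real.exp (-(b/2)))
          = (Real.exp (b/2)*Real.exp (-(b/2))) * ((b⁻¹*(2/b)^m)*(2*A^2*b^q)) := by ring
        _ = (b⁻¹*(2/b)^m)*(2*A^2*b^q) := by rw [hexp1, one_mul]
        _ = 2*A^2*2^m * (b^q / b^(m+1)) := by rw [hpow]; ring
    calc Real.exp (b/2) * (b⁻¹*(2/b)^m) * T
        ≤ 2*A^2*2^m * (b^q / b^(m+1)) := by rw [← h2]; exact h1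
      _ ≤ 2*A^2*2^m * b^(2*k) := mul_le_mul_of_nonneg_left hqb (by positivity)
      _ = 2^(m+1)*A^2*b^(2*k) := by rw [pow_succ]; ring
  have hX : |-(c₁^2 * Real.exp (b/2) * (b⁻¹*(2/b)^m) * T)|
      ≤ M^2*(2^(m+1)*A^2*b^(2*k)) := by
    rw [abs_neg]
    have hnn : 0 ≤ c₁^2 * Real.exp (b/2) * (b⁻¹*(2/b)^m) * T :=
      mul_nonneg (by positivity) hTnn
    rw [abs_of_nonneg hnn]
    have : c₁^2 * Real.exp (b/2) * (b⁻¹*(2/b)^m) * T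
        = c₁^2 * (Real.exp (b/2) * (b⁻¹*(2/b)^m) * T) := by ring
    rw [this]
    have hs0 : 0 ≤ Real.exp (b/2) * (b⁻¹*(2/b)^m) * T :=
      mul_nonneg (by positivity) hTnn
    exact mul_le_mul hc1sq hstep hs0 (by positivity)
  have hY : |2*c₁*c₂ * (∫ r in (0:ℝ)..1, f₂ m k b r)|
      ≤ 2*(M*(M*(A^2*b^(2*k)))) := by
    calc |2*c₁*c₂ * (∫ r in (0:ℝ)..1, f₂ m k b r)|
        = 2*(|c₁| * (|c₂| * |∫ r in (0:ℝ)..1, f₂ m k b r|)) := by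
          rw [abs_mul, abs_mul, abs_mul]
          simp [abs_two]
          ring
      _ ≤ 2*(M*(M*(A^2*b^(2*k)))) := by
          gcongr
  have hZ : |c₂^2*Real.exp (-(b/2)) * (∫ r in (0:ℝ)..1, f₃ m k b r)|
      ≤ M^2*(A^2*b^(2*k)) := by
    rw [abs_mul, abs_mul, abs_of_nonneg (sq_nonneg c₂), abs_of_pos (Real.exp_pos _)]
    calc c₂^2 * Real.exp (-(b/2)) * |∫ r in (0:ℝ)..1, f₃ m k b r|
        ≤ M^2 * Real.exp (-(b/2)) * (A^2*b^(2*k)*Real.exp (b/2)) := by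
          refine mul_le_mul (mul_le_mul_of_nonneg_right hc2sq (Real.exp_pos _).le) hI3
            (abs_nonneg _) (by positivity)
      _ = M^2*(A^2*b^(2*k)) * (Real.exp (b/2) * Real.exp (-(b/2))) := by ring
      _ = M^2*(A^2*b^(2*k)) := by rw [hexp1, mul_one]
  calc |(-(c₁^2 * Real.exp (b/2) * (b⁻¹*(2/b)^m) * T))
        + 2*c₁*c₂ * (∫ r in (0:ℝ)..1, f₂ m k b r)
        + c₂^2*Real.exp (-(b/2)) * (∫ r in (0:ℝ)..1, f₃ m k b r)|
      ≤ |(-(c₁^2 * Real.exp (b/2) * (b⁻¹*(2/b)^m) * T))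
          + 2*c₁*c₂ * (∫ r in (0:ℝ)..1, f₂ m k b r)|
        + |c₂^2*Real.exp (-(b/2)) * (∫ r in (0:ℝ)..1, f₃ m k b r)| := abs_add_le _ _
    _ ≤ |(-(c₁^2 * Real.exp (b/2) * (b⁻¹*(2/b)^m) * T))|
        + |2*c₁*c₂ * (∫ r in (0:ℝ)..1, f₂ m k b r)|
        + |c₂^2*Real.exp (-(b/2)) * (∫ r in (0:ℝ)..1, f₃ m k b r)| := by
        have := abs_add_le (-(c₁^2 * Real.exp (b/2) * (b⁻¹*(2/b)^m) * T))
          (2*c₁*c₂ * (∫ r in (0:ℝ)..1, f₂ m k b r))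
        linarith
    _ ≤ M^2*A^2*(2^(m+1)+3) * b^(2*k) := by
        nlinarith [hX, hY, hZ]
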